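/- Let ℂ be symmetric positive definite on symmetric matrices with smallest eigenvalue θ_min(ℂ) > 0 and let ℂᵉᵖ be the rank-one correction ℂᵉᵖ = ℂ − (ℂN ⊗ ℂN)/(N:ℂN + H̄) with H̄ > 0. Then the smallest eigenvalue of ℂᵉᵖ satisfies θ_min(ℂᵉᵖ) ≥ θ_min(ℂ) · H̄/(N:ℂ(N) + H̄) > 0. -/
import Mathlib


noncomputable def fip {d : ℕ} (A B : Matrix (Fin d) (Fin d) ℝ) : ℝ :=
  ∑ i, ∑ j, A i j * B i j

noncomputable def Cep {d : ℕ}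
    (C : Matrix (Fin d) (Fin d) ℝ →ₗ[ℝ] Matrix (Fin d) (Fin d) ℝ)
    (N : Matrix (Fin d) (Fin d) ℝ) (Hbar : ℝ)
    (e : Matrix (Fin d) (Fin d) ℝ) : Matrix (Fin d) (Fin d) ℝ :=
  C e - (fip N (C e) / (fip N (C N) + Hbar)) • C N

lemma fip_comm {d : ℕ} (A B : Matrix (Fin d) (Fin d) ℝ) : fip A B = fip B A := by
  simp [fip, mul_comm]

lemma fip_sub_left {d : ℕ} (A B M : Matrix (Fin d) (Fin d) ℝ) :
    fip (A - B) M = fip A M - fip B M := by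
  simp [fip, sub_mul, Finset.sum_sub_distrib]

lemma fip_smul_left {d : ℕ} (c : ℝ) (A M : Matrix (Fin d) (Fin d) ℝ) :
    fip (c • A) M = c * fip A M := by
  simp [fip, Finset.mul_sum, mul_assoc]

lemma fip_sub_right {d : ℕ} (M A B : Matrix (Fin d) (Fin d) ℝ) :
    fip M (A - B) = fip M A - fip M B := by
  rw [fip_comm, fip_sub_left, fip_comm A M, fip_comm B M]

lemma fip_smul_right {d : ℕ} (c : ℝ) (M A : Matrix (Fin d) (Fin d) ℝ) :
    fip M (c • A) = c * fip M A := by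
  rw [fip_comm, fip_smul_left, fip_comm A M]

lemma fip_self_nonneg {d : ℕ} (A : Matrix (Fin d) (Fin d) ℝ) : 0 ≤ fip A A := by
  apply Finset.sum_nonneg
  intro i _
  exact Finset.sum_nonneg fun j _ => mul_self_nonneg _

lemma fip_self_pos {d : ℕ} (A : Matrix (Fin d) (Fin d) ℝ) (h : A ≠ 0) : 0 < fip A A := by
  obtain ⟨i, j, hij⟩ : ∃ i j, A i j ≠ 0 := by
    by_contra h'
    push_neg at h'
    exact h (by ext i j; simp [h'])
  apply Finset.sum_pos' (fun i _ => Finset.sum_nonneg fun j _ => mul_self_nonneg _)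
  refine ⟨i, Finset.mem_univ i, ?_⟩
  apply Finset.sum_pos' (fun j _ => mul_self_nonneg _)
  exact ⟨j, Finset.mem_univ j, mul_self_pos.mpr hij⟩

/-- lower bound on the smallest eigenvalue (Rayleigh quotient) of
the rank-one-corrected modulus: e : ℂᵉᵖ(e) ≥ θ_min(ℂ)·H̄/(N:ℂ(N)+H̄) ‖e‖². -/
theorem stmt_9 (d : ℕ)
    (C : Matrix (Fin d) (Fin d) ℝ →ₗ[ℝ] Matrix (Fin d) (Fin d) ℝ)
    (hCsymm : ∀ a b, fip (C a) b = fip a (C b))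
    (θ : ℝ) (hθ : 0 < θ)
    (hCeig : ∀ e : Matrix (Fin d) (Fin d) ℝ, e.IsSymm → θ * fip e e ≤ fip e (C e))
    (N : Matrix (Fin d) (Fin d) ℝ) (hN : N.IsSymm) (hN0 : N ≠ 0)
    (Hbar : ℝ) (hH : 0 < Hbar) :
    (∀ e : Matrix (Fin d) (Fin d) ℝ, e.IsSymm →
      θ * (Hbar / (fip N (C N) + Hbar)) * fip e e ≤ fip e (Cep C N Hbar e)) ∧
    0 < θ * (Hbar / (fip N (C N) + Hbar)) := by
  have hNN : 0 < fip N N := fip_self_pos N hN0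
  have ha : 0 < fip N (C N) := lt_of_lt_of_le (mul_pos hθ hNN) (hCeig N hN)
  set a := fip N (C N) with ha_def
  have hD : 0 < a + Hbar := by linarith
  constructor
  · intro e he
    set x := fip e (C e) with hx_def
    set s := fip N (C e) with hs_def
    have hxe : θ * fip e e ≤ x := hCeig e he
    have hee : 0 ≤ fip e e := fip_self_nonneg e
    have heCN : fip e (C N) = s := by rw [← hCsymm, fip_comm]
    -- Cauchy-Schwarz: s^2 ≤ a * x
    have hCS : s * s ≤ a * x := by
      set u := a • e - s • N with hu_def
      have husym : u.IsSymm := by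
        rw [hu_def]
        exact (he.smul a).sub (hN.smul s)
      have h0 : 0 ≤ fip u (C u) :=
        le_trans (mul_nonneg hθ.le (fip_self_nonneg u)) (hCeig u husym)
      have hexp : fip u (C u) = a * (a * x - s * s) := by
        rw [hu_def]
        simp only [map_sub, map_smul, fip_sub_left, fip_sub_right, fip_smul_left,
          fip_smul_right, heCN, ← hs_def, ← hx_def, ← ha_def]
        ring
      nlinarith
    -- expand Cep
    have hcep : fip e (Cep C N Hbar e) = x - s / (a + Hbar) * s := by
      unfold Cep
      rw [fip_sub_right, fip_smul_right, heCN, ← hs_def, ← hx_def, ← ha_def]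
    rw [hcep,
      show θ * (Hbar / (a + Hbar)) * fip e e = θ * Hbar * fip e e / (a + Hbar) by ring,
      show x - s / (a + Hbar) * s = (x * (a + Hbar) - s * s) / (a + Hbar) by
        field_simp]
    gcongr
    nlinarith [mul_nonneg hH.le (sub_nonneg.mpr hxe)]
  · positivity
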